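/- Fix reals Δ₋ < Δ₊, Ψ > 0, Λ₀ ∈ ℝ, and p ∈ (0,1). Define λ(p) = log(p/(1−p)), Γ(x) = min(max(x, Δ₋), Δ₊), Λ(p) = (Ψ/((Δ₊−Δ₋)/2))·(Γ(λ(p)) − (Δ₋+Δ₊)/2), V_p = p·(1−p), and for κ ≥ 0 the weight ω = 1/(1+κ·V_p) and anchored encoding Λ̂_κ = ω·Λ(p) + (1−ω)·Λ₀; let s(x) = 1/(1+exp(−x)) and Φ = s(Λ(p)). Then there exist constants C > 0 and δ > 0 such that for all κ ∈ [0, δ] and all σ ∈ (0, δ]: | ( ∫ s(Λ̂_κ + x) dN(0,σ²)(x) − p ) − (Φ − p) − κ·Φ·(1−Φ)·V_p·(Λ₀ − Λ(p)) − (σ²/2)·Φ·(1−Φ)·(1−2Φ) | ≤ C·(κ² + σ⁴). -/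

import Mathlib

/-!
Write `Λ̂_κ = Λ + h` with `h = κV/(1 + κV) · (Λ₀ - Λ)`, so that `h = κV (Λ₀ - Λ) + O(κ²)`.
Every derivative of `s` is a polynomial in `s ∈ (0, 1)`, hence bounded, so Taylor's theorem holds
with remainders that are uniform in the base point. Integrating the third-order expansion of `s`
around `Λ + h` against `N(0, σ²)`, whose odd moments vanish, whose second moment is `σ²` and whose
fourth moment is `O(σ⁴)`, gives `E s(Λ + h + ε) = s(Λ + h) + σ²/2 · s''(Λ + h) + O(σ⁴)`. Expanding
`s(Λ + h)` to first and `s''(Λ + h)` to zeroth order in `h`, and using `2κσ² ≤ κ² + σ⁴`, leaves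
the Attraction and Repulsion terms with an `O(κ² + σ⁴)` error.
-/

open MeasureTheory ProbabilityTheory

/-- The log-odds function `λ(p) = log (p/(1-p))`. -/
noncomputable def logOdds (p : ℝ) : ℝ := Real.log (p / (1 - p))

/-- The logistic function `s(x) = 1/(1 + exp (-x))`. -/
noncomputable def logistic (x : ℝ) : ℝ := 1 / (1 + Real.exp (-x))

/-- Clipping to the interval `[Δ₋, Δ₊]`. -/
noncomputable def clip (Δm Δp x : ℝ) : ℝ := min (max x Δm) Δp

/-- The scaled BLO encoding `Λ(p)`. -/
noncomputable def bloLambda (Δm Δp Ψ p : ℝ) : ℝ :=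
  Ψ / ((Δp - Δm) / 2) * (clip Δm Δp (logOdds p) - (Δm + Δp) / 2)

/-- The anchored BLO encoding with anchor weight parameter `κ`. -/
noncomputable def bloHatKappa (Δm Δp Ψ Λ₀ κ p : ℝ) : ℝ :=
  (1 / (1 + κ * (p * (1 - p)))) * bloLambda Δm Δp Ψ p +
    (1 - 1 / (1 + κ * (p * (1 - p)))) * Λ₀

open Polynomial Real
open scoped NNReal Nat

theorem logistic_eq_sigmoid : logistic = sigmoid := by
  funext x
  rw [logistic, sigmoid_def, one_div]

theorem exists_iteratedDeriv_sigmoid_eq_eval (n : ℕ) :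
    ∃ P : ℝ[X], iteratedDeriv n sigmoid = fun x => P.eval (sigmoid x) := by
  induction n with
  | zero => exact ⟨X, by simp⟩
  | succ n ih =>
    obtain ⟨P, hP⟩ := ih
    refine ⟨derivative P * (X * (1 - X)), funext fun x => ?_⟩
    have hd : HasDerivAt (fun x => P.eval (sigmoid x)) _ x :=
      (P.hasDerivAt _).comp x (hasDerivAt_sigmoid x)
    rw [iteratedDeriv_succ, hP, hd.deriv]
    simp

theorem exists_abs_iteratedDeriv_sigmoid_le (n : ℕ) :
    ∃ M, ∀ x, |iteratedDeriv n sigmoid x| ≤ M := by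
  obtain ⟨P, hP⟩ := exists_iteratedDeriv_sigmoid_eq_eval n
  obtain ⟨M, hM⟩ := isCompact_Icc.exists_bound_of_continuousOn
    (P.continuous.continuousOn (s := Set.Icc (0 : ℝ) 1))
  exact ⟨M, fun x => by
    simpa [hP] using hM _ ⟨(sigmoid_pos x).le, (sigmoid_lt_one x).le⟩⟩

theorem iteratedDeriv_one_sigmoid (x : ℝ) :
    iteratedDeriv 1 sigmoid x = sigmoid x * (1 - sigmoid x) := by
  rw [iteratedDeriv_one, deriv_sigmoid]

theorem iteratedDeriv_two_sigmoid (x : ℝ) :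
    iteratedDeriv 2 sigmoid x = sigmoid x * (1 - sigmoid x) * (1 - 2 * sigmoid x) := by
  have hs := hasDerivAt_sigmoid x
  rw [iteratedDeriv_succ, iteratedDeriv_one, deriv_sigmoid,
    (hs.fun_mul (hs.const_sub 1)).deriv]
  ring

theorem abs_sub_sum_iteratedDeriv_le {f : ℝ → ℝ} {n : ℕ} (hf : ContDiff ℝ (n + 1) f) {M : ℝ}
    (hM : ∀ x, |iteratedDeriv (n + 1) f x| ≤ M) (a h : ℝ) :
    |f (a + h) - ∑ k ∈ Finset.range (n + 1), iteratedDeriv k f a * h ^ k / k !| ≤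
      M * |h| ^ (n + 1) := by
  rcases eq_or_ne h 0 with rfl | hh
  · simp [Finset.sum_range_succ']
  have hne : a ≠ a + h := fun e => hh (by linarith)
  obtain ⟨c, -, hc⟩ := taylor_mean_remainder_lagrange_iteratedDeriv hne hf.contDiffOn
  have htaylor : taylorWithinEval f n (Set.uIcc a (a + h)) a (a + h) =
      ∑ k ∈ Finset.range (n + 1), iteratedDeriv k f a * h ^ k / k ! := by
    rw [taylor_within_apply]
    refine Finset.sum_congr rfl fun k hk => ?_
    rw [iteratedDerivWithin_eq_iteratedDeriv (uniqueDiffOn_uIcc hne)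
      (hf.contDiffAt.of_le (by exact_mod_cast (Finset.mem_range_succ_iff.mp hk).trans n.le_succ))
      Set.left_mem_uIcc, smul_eq_mul, add_sub_cancel_left]
    field_simp
  rw [← htaylor, hc, add_sub_cancel_left, abs_div, abs_mul, abs_pow, Nat.abs_cast]
  calc |iteratedDeriv (n + 1) f c| * |h| ^ (n + 1) / ((n + 1)! : ℝ)
      ≤ |iteratedDeriv (n + 1) f c| * |h| ^ (n + 1) :=
        div_le_self (by positivity) (by exact_mod_cast (n + 1).factorial_pos)
    _ ≤ M * |h| ^ (n + 1) := by gcongr; exact hM c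

theorem abs_iteratedDeriv_add_sub_le {f : ℝ → ℝ} {k : ℕ} (hf : ContDiff ℝ (k + 1) f) {M : ℝ}
    (hM : ∀ x, |iteratedDeriv (k + 1) f x| ≤ M) (y h : ℝ) :
    |iteratedDeriv k f (y + h) - iteratedDeriv k f y| ≤ M * |h| := by
  have hg : ContDiff ℝ (0 + 1) (iteratedDeriv k f) := by
    rw [iteratedDeriv_eq_iterate]
    exact ContDiff.iterate_deriv' 1 k (by rwa [add_comm, Nat.cast_add, Nat.cast_one])
  have hg' : iteratedDeriv (0 + 1) (iteratedDeriv k f) = iteratedDeriv (k + 1) f := by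
    rw [zero_add, iteratedDeriv_one, ← iteratedDeriv_succ]
  simpa using abs_sub_sum_iteratedDeriv_le hg (hg' ▸ hM) y h

section GaussianMoments

variable {μ : ℝ} {v : ℝ≥0}

theorem integrable_pow_gaussianReal (n : ℕ) : Integrable (fun x => x ^ n) (gaussianReal μ v) :=
  integrable_pow_of_mem_interior_integrableExpSet (by simp) n

theorem integral_pow_gaussianReal_of_odd {n : ℕ} (hn : Odd n) :
    ∫ x, x ^ n ∂gaussianReal 0 v = 0 := by
  have h : ∫ x, x ^ n ∂gaussianReal 0 v = ∫ x, (-x) ^ n ∂gaussianReal 0 v := by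
    conv_lhs => rw [← neg_zero, ← gaussianReal_map_neg]
    exact integral_map (by fun_prop) (by fun_prop)
  simp only [hn.neg_pow, integral_neg] at h
  linarith

theorem integral_sq_gaussianReal : ∫ x, x ^ 2 ∂gaussianReal 0 v = v := by
  have h := variance_fun_id_gaussianReal (μ := 0) (v := v)
  rw [variance_eq_integral measurable_id'.aemeasurable] at h
  simpa using h

theorem integral_pow_gaussianReal_sq_toNNReal (σ : ℝ) (n : ℕ) :
    ∫ x, x ^ n ∂gaussianReal 0 (σ ^ 2).toNNReal = σ ^ n * ∫ x, x ^ n ∂gaussianReal 0 1 := by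
  have h : (gaussianReal 0 1).map (σ * ·) = gaussianReal 0 (σ ^ 2).toNNReal := by
    rw [gaussianReal_map_const_mul, mul_zero, mul_one]
    congr 1
    ext
    simp [sq_nonneg]
  rw [← h, integral_map (by fun_prop) (by fun_prop), ← integral_const_mul]
  simp_rw [mul_pow]

end GaussianMoments

theorem abs_integral_comp_add_gaussianReal_sub_le {f : ℝ → ℝ} (hf : ContDiff ℝ 4 f) {M : ℝ}
    (hM : ∀ x, |iteratedDeriv 4 f x| ≤ M) (y σ : ℝ) :
    |∫ x, f (y + x) ∂gaussianReal 0 (σ ^ 2).toNNReal - (f y + σ ^ 2 / 2 * iteratedDeriv 2 f y)| ≤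
      M * (∫ x, x ^ 4 ∂gaussianReal 0 1) * σ ^ 4 := by
  set N := gaussianReal 0 (σ ^ 2).toNNReal
  set P : ℝ → ℝ := fun x => ∑ k ∈ Finset.range 4, iteratedDeriv k f y * x ^ k / (k ! : ℝ)
  have hR : ∀ x, |f (y + x) - P x| ≤ M * x ^ 4 := fun x => by
    simpa only [(by decide : Even 4).pow_abs] using abs_sub_sum_iteratedDeriv_le hf hM y x
  have hP_int : Integrable P N := integrable_finsetSum _ fun k _ =>
    ((integrable_pow_gaussianReal k).const_mul _).div_const _
  have hR_int : Integrable (fun x => f (y + x) - P x) N :=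
    ((integrable_pow_gaussianReal 4).const_mul M).mono'
      (by have := hf.continuous; fun_prop) (ae_of_all _ hR)
  have hP : ∫ x, P x ∂N = f y + σ ^ 2 / 2 * iteratedDeriv 2 f y := by
    rw [integral_finsetSum _ fun k _ => ((integrable_pow_gaussianReal k).const_mul _).div_const _]
    simp only [Finset.sum_range_succ, Finset.range_zero, Finset.sum_empty, integral_div,
      integral_const_mul, integral_sq_gaussianReal, integral_pow_gaussianReal_of_odd odd_one,
      integral_pow_gaussianReal_of_odd (by decide : Odd 3), pow_zero, integral_const,
      probReal_univ, one_smul, iteratedDeriv_zero, Real.coe_toNNReal _ (sq_nonneg σ),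
      Nat.factorial]
    push_cast
    ring
  calc |∫ x, f (y + x) ∂N - (f y + σ ^ 2 / 2 * iteratedDeriv 2 f y)|
      = |∫ x, (f (y + x) - P x) ∂N| := by
        rw [integral_sub ((hR_int.add hP_int).congr (ae_of_all _ fun x => sub_add_cancel _ (P x)))
          hP_int, hP]
    _ ≤ ∫ x, M * x ^ 4 ∂N :=
        norm_integral_le_of_norm_le (f := fun x => f (y + x) - P x)
          ((integrable_pow_gaussianReal 4).const_mul M) (ae_of_all _ hR)
    _ = M * (∫ x, x ^ 4 ∂gaussianReal 0 1) * σ ^ 4 := by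
        rw [integral_const_mul, integral_pow_gaussianReal_sq_toNNReal]
        ring

theorem abs_integral_comp_shift_add_gaussianReal_sub_le {f : ℝ → ℝ} (hf : ContDiff ℝ 4 f)
    {M₂ M₃ M₄ : ℝ} (hM₂ : ∀ x, |iteratedDeriv 2 f x| ≤ M₂)
    (hM₃ : ∀ x, |iteratedDeriv 3 f x| ≤ M₃) (hM₄ : ∀ x, |iteratedDeriv 4 f x| ≤ M₄)
    (y h σ : ℝ) :
    |∫ x, f (y + h + x) ∂gaussianReal 0 (σ ^ 2).toNNReal - f y - iteratedDeriv 1 f y * h -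
        σ ^ 2 / 2 * iteratedDeriv 2 f y| ≤
      M₂ * h ^ 2 + M₃ * σ ^ 2 / 2 * |h| + M₄ * (∫ x, x ^ 4 ∂gaussianReal 0 1) * σ ^ 4 := by
  have hsmooth := abs_integral_comp_add_gaussianReal_sub_le hf hM₄ (y + h) σ
  have hshift : |f (y + h) - f y - iteratedDeriv 1 f y * h| ≤ M₂ * h ^ 2 := by
    simpa [Finset.sum_range_succ, sub_sub] using
      abs_sub_sum_iteratedDeriv_le (hf.of_le (by norm_num)) hM₂ y h
  have hcurv : |σ ^ 2 / 2 * (iteratedDeriv 2 f (y + h) - iteratedDeriv 2 f y)| ≤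
      M₃ * σ ^ 2 / 2 * |h| := by
    rw [abs_mul, abs_of_nonneg (by positivity)]
    refine (mul_le_mul_of_nonneg_left (abs_iteratedDeriv_add_sub_le (hf.of_le (by norm_num)) hM₃
      y h) (by positivity)).trans_eq ?_
    ring
  calc _ = |(∫ x, f (y + h + x) ∂gaussianReal 0 (σ ^ 2).toNNReal -
          (f (y + h) + σ ^ 2 / 2 * iteratedDeriv 2 f (y + h))) +
        (f (y + h) - f y - iteratedDeriv 1 f y * h) +
        σ ^ 2 / 2 * (iteratedDeriv 2 f (y + h) - iteratedDeriv 2 f y)| := by ring_nf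
    _ ≤ _ := (abs_add_three _ _ _).trans (by linarith)

theorem anchored_eq_add_shift {Λ Λ₀ t : ℝ} (ht : 1 + t ≠ 0) :
    1 / (1 + t) * Λ + (1 - 1 / (1 + t)) * Λ₀ = Λ + t / (1 + t) * (Λ₀ - Λ) := by
  field_simp
  ring

theorem abs_div_one_add_mul_le {t : ℝ} (ht : 0 ≤ t) (D : ℝ) : |t / (1 + t) * D| ≤ t * |D| := by
  rw [abs_mul, abs_of_nonneg (by positivity)]
  gcongr
  exact div_le_self ht (by linarith)

theorem abs_div_one_add_mul_sub_mul_le {t : ℝ} (ht : 0 ≤ t) (D : ℝ) :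
    |t / (1 + t) * D - t * D| ≤ t ^ 2 * |D| := by
  have h : t / (1 + t) * D - t * D = -(t ^ 2 / (1 + t)) * D := by
    field_simp
    ring
  rw [h, abs_mul, abs_neg, abs_of_nonneg (by positivity)]
  gcongr
  exact div_le_self (sq_nonneg t) (by linarith)

theorem exists_abs_anchored_sigmoid_bias_sub_le (Λ Λ₀ V : ℝ) (hV : 0 ≤ V) :
    ∃ C, 0 < C ∧ ∀ κ σ : ℝ, 0 ≤ κ →
      |∫ x, sigmoid (1 / (1 + κ * V) * Λ + (1 - 1 / (1 + κ * V)) * Λ₀ + x)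
          ∂gaussianReal 0 (σ ^ 2).toNNReal - sigmoid Λ -
        κ * iteratedDeriv 1 sigmoid Λ * V * (Λ₀ - Λ) - σ ^ 2 / 2 * iteratedDeriv 2 sigmoid Λ| ≤
      C * (κ ^ 2 + σ ^ 4) := by
  obtain ⟨M₁, hM₁⟩ := exists_abs_iteratedDeriv_sigmoid_le 1
  obtain ⟨M₂, hM₂⟩ := exists_abs_iteratedDeriv_sigmoid_le 2
  obtain ⟨M₃, hM₃⟩ := exists_abs_iteratedDeriv_sigmoid_le 3
  obtain ⟨M₄, hM₄⟩ := exists_abs_iteratedDeriv_sigmoid_le 4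
  have hM₁0 : 0 ≤ M₁ := (abs_nonneg _).trans (hM₁ 0)
  have hM₂0 : 0 ≤ M₂ := (abs_nonneg _).trans (hM₂ 0)
  have hM₃0 : 0 ≤ M₃ := (abs_nonneg _).trans (hM₃ 0)
  have hM₄0 : 0 ≤ M₄ := (abs_nonneg _).trans (hM₄ 0)
  set m₄ := ∫ x, x ^ 4 ∂gaussianReal 0 1
  have hm₄ : 0 ≤ m₄ := integral_nonneg fun x => by positivity
  set K := V * |Λ₀ - Λ|
  have hK : 0 ≤ K := by positivity
  refine ⟨M₁ * V * K + M₂ * K ^ 2 + M₃ * K + M₄ * m₄ + 1, by positivity, fun κ σ hκ => ?_⟩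
  have ht : 0 ≤ κ * V := mul_nonneg hκ hV
  rw [anchored_eq_add_shift (by positivity : (1 : ℝ) + κ * V ≠ 0)]
  set h := κ * V / (1 + κ * V) * (Λ₀ - Λ)
  have hh : |h| ≤ κ * K := (abs_div_one_add_mul_le ht _).trans_eq (by ring)
  have hh2 : h ^ 2 ≤ (κ * K) ^ 2 := by
    rw [← sq_abs]
    gcongr
  have hlin : |iteratedDeriv 1 sigmoid Λ * (h - κ * V * (Λ₀ - Λ))| ≤ M₁ * V * K * κ ^ 2 := by
    rw [abs_mul]
    calc _ ≤ M₁ * ((κ * V) ^ 2 * |Λ₀ - Λ|) := by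
          gcongr
          exacts [hM₁ Λ, abs_div_one_add_mul_sub_mul_le ht _]
      _ = M₁ * V * K * κ ^ 2 := by ring
  have hmain := abs_integral_comp_shift_add_gaussianReal_sub_le (contDiff_sigmoid.of_le le_top)
    hM₂ hM₃ hM₄ Λ h σ
  have hamgm : 2 * κ * σ ^ 2 ≤ κ ^ 2 + σ ^ 4 := by nlinarith [sq_nonneg (κ - σ ^ 2)]
  have hq : 0 ≤ κ ^ 2 + σ ^ 4 := by positivity
  calc _ = |(∫ x, sigmoid (Λ + h + x) ∂gaussianReal 0 (σ ^ 2).toNNReal - sigmoid Λ -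
          iteratedDeriv 1 sigmoid Λ * h - σ ^ 2 / 2 * iteratedDeriv 2 sigmoid Λ) +
        iteratedDeriv 1 sigmoid Λ * (h - κ * V * (Λ₀ - Λ))| := by ring_nf
    _ ≤ _ := by
      refine (abs_add_le _ _).trans ?_
      linarith [mul_le_mul_of_nonneg_left hh2 hM₂0,
        mul_le_mul_of_nonneg_left hh (by positivity : 0 ≤ M₃ * σ ^ 2 / 2),
        mul_le_mul_of_nonneg_left hamgm (by positivity : 0 ≤ M₃ * K),
        mul_nonneg (mul_nonneg hM₃0 hK) hq, mul_nonneg (mul_nonneg hM₄0 hm₄) (sq_nonneg κ),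
        mul_nonneg (mul_nonneg hM₂0 (sq_nonneg K)) (pow_nonneg (sq_nonneg σ) 2),
        mul_nonneg (mul_nonneg (mul_nonneg hM₁0 hV) hK) (pow_nonneg (sq_nonneg σ) 2)]

theorem stmt10_general (Δm Δp Ψ Λ₀ p : ℝ)
    (hp : p ∈ Set.Ioo (0 : ℝ) 1) :
    ∃ C : ℝ, 0 < C ∧ ∃ δ : ℝ, 0 < δ ∧
      ∀ κ ∈ Set.Icc (0 : ℝ) δ, ∀ σ ∈ Set.Ioc (0 : ℝ) δ,
        |((∫ x, logistic (bloHatKappa Δm Δp Ψ Λ₀ κ p + x)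
              ∂(gaussianReal 0 ((σ ^ 2).toNNReal))) - p) -
            (logistic (bloLambda Δm Δp Ψ p) - p) -
            κ * logistic (bloLambda Δm Δp Ψ p) *
              (1 - logistic (bloLambda Δm Δp Ψ p)) * (p * (1 - p)) *
              (Λ₀ - bloLambda Δm Δp Ψ p) -
            σ ^ 2 / 2 * (logistic (bloLambda Δm Δp Ψ p) *
              (1 - logistic (bloLambda Δm Δp Ψ p)) *
              (1 - 2 * logistic (bloLambda Δm Δp Ψ p)))| ≤
          C * (κ ^ 2 + σ ^ 4) := by
  have hV : 0 ≤ p * (1 - p) := mul_nonneg hp.1.le (sub_nonneg.mpr hp.2.le)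
  obtain ⟨C, hC, hbias⟩ :=
    exists_abs_anchored_sigmoid_bias_sub_le (bloLambda Δm Δp Ψ p) Λ₀ (p * (1 - p)) hV
  refine ⟨C, hC, 1, one_pos, fun κ hκ σ _ => ?_⟩
  rw [logistic_eq_sigmoid, bloHatKappa]
  convert hbias κ σ hκ.1 using 2
  rw [iteratedDeriv_one_sigmoid, iteratedDeriv_two_sigmoid]
  ring

/-- Bias expansion of the BLO model: writing `Φ = s(Λ(p))`, the bias
`E[s(Λ̂_κ + ε)] - p` with `ε ~ N(0,σ²)` equals `(Φ - p)` plus the Attraction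
term `κ Φ(1-Φ) V_p (Λ₀ - Λ(p))` plus the Repulsion term
`(σ²/2) Φ(1-Φ)(1-2Φ)`, up to an error `O(κ² + σ⁴)`. -/
theorem stmt10 (Δm Δp Ψ Λ₀ p : ℝ) (hΔ : Δm < Δp) (hΨ : 0 < Ψ)
    (hp : p ∈ Set.Ioo (0 : ℝ) 1) :
    ∃ C : ℝ, 0 < C ∧ ∃ δ : ℝ, 0 < δ ∧
      ∀ κ ∈ Set.Icc (0 : ℝ) δ, ∀ σ ∈ Set.Ioc (0 : ℝ) δ,
        |((∫ x, logistic (bloHatKappa Δm Δp Ψ Λ₀ κ p + x)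
              ∂(gaussianReal 0 ((σ ^ 2).toNNReal))) - p) -
            (logistic (bloLambda Δm Δp Ψ p) - p) -
            κ * logistic (bloLambda Δm Δp Ψ p) *
              (1 - logistic (bloLambda Δm Δp Ψ p)) * (p * (1 - p)) *
              (Λ₀ - bloLambda Δm Δp Ψ p) -
            σ ^ 2 / 2 * (logistic (bloLambda Δm Δp Ψ p) *
              (1 - logistic (bloLambda Δm Δp Ψ p)) *
              (1 - 2 * logistic (bloLambda Δm Δp Ψ p)))| ≤
          C * (κ ^ 2 + σ ^ 4) :=
  stmt10_general Δm Δp Ψ Λ₀ p hp
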